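/- arXiv:2605.19767 — 2 statements merged into one kernel-verified Lean document; each statement's English description precedes it below -/
import Mathlib

section
/- (Directional collapse under naive scaling: signal decay, FD-SNR formula, and critical rank.) Let L : ℝ^{d_out×d_in} → ℝ be Fréchet differentiable with matrix gradient G(W). Fix rank r ≥ 1, scale α > 0, fixed vectors b_j ∈ ℝ^{d_out}, a_j ∈ ℝ^{d_in} for j = 1,…,r, and an atom index k. Define F(b, a) = L(W₀ + (α/r)·(b aᵀ + Σ_{j≠k} b_j a_jᵀ)), let G = G(W₀ + (α/r)·Σ_{j=1}^r b_j a_jᵀ), and let g_k = (G a_k ; Gᵀ b_k) ∈ ℝ^q with q = d_out + d_in. Then: (i) the active-atom gradient of F at (b_k, a_k) equals (α/r)·g_k, so its norm is (α/r)·‖g_k‖; (ii) for a standard Gaussian vector z in ℝ^q, the signal power E[⟨z, (α/r)g_k⟩²] equals α²‖g_k‖²/r²; (iii) for any μ > 0 and σ_ξ > 0, the FD-SNR, defined as the signal power divided by the noise power σ_ξ²/(2μ²), equals 2α²μ²‖g_k‖²/(r²σ_ξ²); and (iv) if g_k ≠ 0, the FD-SNR equals 1 exactly when r = √2·α·μ·‖g_k‖/σ_ξ.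 -/
open Matrix Finset MeasureTheory ProbabilityTheory

attribute [local instance] Matrix.normedAddCommGroup Matrix.normedSpace

section GaussianMoments

open Real Filter
open scoped ENNReal NNReal

private lemma sq_tendsto_top' : Tendsto (fun y : ℝ => y^2) atTop atTop :=
  tendsto_pow_atTop (n := 2) two_ne_zero

private lemma sq_tendsto_bot' : Tendsto (fun y : ℝ => y^2) atBot atTop := by
  have h := sq_tendsto_top'.comp
    (tendsto_neg_atBot_atTop : Tendsto (fun y : ℝ => -y) atBot atTop)
  simpa [Function.comp_def, neg_sq] using h

private lemma tendsto_exp_bot' :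
    Tendsto (fun y : ℝ => -Real.exp (-(2⁻¹) * y^2)) atBot (nhds 0) := by
  rw [show (0:ℝ) = -0 by ring]
  exact ((Real.tendsto_exp_atBot.comp
    (sq_tendsto_bot'.const_mul_atTop_of_neg (by norm_num)))).neg

private lemma tendsto_exp_top' :
    Tendsto (fun y : ℝ => -Real.exp (-(2⁻¹) * y^2)) atTop (nhds 0) := by
  rw [show (0:ℝ) = -0 by ring]
  exact ((Real.tendsto_exp_atBot.comp
    (sq_tendsto_top'.const_mul_atTop_of_neg (by norm_num)))).neg

private lemma exp_deriv_aux' (x : ℝ) :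
    HasDerivAt (fun y : ℝ => -Real.exp (-(2⁻¹) * y^2)) (x * Real.exp (-(2⁻¹) * x^2)) x := by
  have h1 : HasDerivAt (fun y : ℝ => -(2⁻¹) * y^2) (-(2⁻¹) * (2*x)) x := by
    simpa using ((hasDerivAt_pow 2 x)).const_mul (-(2⁻¹ : ℝ))
  have := (h1.exp).fun_neg
  exact this.congr_deriv (by ring)

private lemma integrable_e' : Integrable (fun x : ℝ => Real.exp (-(2⁻¹) * x^2)) :=
  integrable_exp_neg_mul_sq (by norm_num)

private lemma integrable_id_e' : Integrable (fun x : ℝ => x * Real.exp (-(2⁻¹) * x^2)) :=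
  integrable_mul_exp_neg_mul_sq (by norm_num)

private lemma integrable_sq_e' : Integrable (fun x : ℝ => x^2 * Real.exp (-(2⁻¹) * x^2)) := by
  have := integrable_rpow_mul_exp_neg_mul_sq (b := 2⁻¹) (by norm_num) (s := 2) (by norm_num)
  simpa [Real.rpow_two] using this

private lemma int_id_e' : ∫ x : ℝ, x * Real.exp (-(2⁻¹) * x^2) = 0 := by
  have h := integral_of_hasDerivAt_of_tendsto (f := fun y : ℝ => -Real.exp (-(2⁻¹) * y^2))
    (f' := fun x : ℝ => x * Real.exp (-(2⁻¹) * x^2)) exp_deriv_aux' integrable_id_e'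
    tendsto_exp_bot' tendsto_exp_top'
  simpa using h

private lemma int_e' : ∫ x : ℝ, Real.exp (-(2⁻¹) * x^2) = Real.sqrt (2*π) := by
  rw [integral_gaussian 2⁻¹]
  rw [show π/2⁻¹ = 2*π by ring]

private lemma int_sq_e' : ∫ x : ℝ, x^2 * Real.exp (-(2⁻¹) * x^2) = Real.sqrt (2*π) := by
  have h := integral_mul_deriv_eq_deriv_mul_of_integrable (u := fun x : ℝ => x)
    (u' := fun _ => (1:ℝ))
    (v := fun y : ℝ => -Real.exp (-(2⁻¹) * y^2))
    (v' := fun x : ℝ => x * Real.exp (-(2⁻¹) * x^2))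
    (fun x _ => hasDerivAt_id x) (fun x _ => exp_deriv_aux' x)
    (by have := integrable_sq_e'; simp only [Pi.mul_def]; convert this using 2 with x; ring)
    (by have := integrable_e'.neg; simp only [Pi.mul_def]; convert this using 2 with x; simp)
    (by have := integrable_id_e'.neg; simp only [Pi.mul_def]; convert this using 2 with x; simp)
  calc ∫ x : ℝ, x^2 * Real.exp (-(2⁻¹) * x^2)
      = ∫ x : ℝ, x * (x * Real.exp (-(2⁻¹) * x^2)) := by
        congr 1; ext x; ring
    _ = Real.sqrt (2*π) := by
        rw [h, ← int_e', ← integral_neg]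
        congr 1; ext x; ring

private lemma gpdf_eq' (x : ℝ) :
    gaussianPDFReal 0 1 x = (Real.sqrt (2*π))⁻¹ * Real.exp (-(2⁻¹) * x^2) := by
  unfold gaussianPDFReal
  push_cast
  ring_nf

private lemma gauss_integral_eq' (f : ℝ → ℝ) :
    ∫ x, f x ∂(gaussianReal 0 1) = ∫ x, gaussianPDFReal 0 1 x * f x := by
  rw [gaussianReal_of_var_ne_zero 0 one_ne_zero]
  have hmeas : Measurable fun x => (gaussianPDFReal 0 1 x).toNNReal :=
    (measurable_gaussianPDFReal 0 1).real_toNNReal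
  rw [show (gaussianPDF 0 1) = fun x => ((gaussianPDFReal 0 1 x).toNNReal : ℝ≥0∞) from rfl]
  rw [integral_withDensity_eq_integral_smul hmeas]
  congr 1
  ext x
  simp [NNReal.smul_def, Real.coe_toNNReal _ (gaussianPDFReal_nonneg 0 1 x)]

private lemma gauss_integrable_iff' (f : ℝ → ℝ) :
    Integrable f (gaussianReal 0 1) ↔ Integrable (fun x => gaussianPDFReal 0 1 x * f x) := by
  rw [gaussianReal_of_var_ne_zero 0 one_ne_zero]
  have hmeas : Measurable fun x => (gaussianPDFReal 0 1 x).toNNReal :=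
    (measurable_gaussianPDFReal 0 1).real_toNNReal
  rw [show (gaussianPDF 0 1) = fun x => ((gaussianPDFReal 0 1 x).toNNReal : ℝ≥0∞) from rfl]
  rw [integrable_withDensity_iff_integrable_smul hmeas]
  constructor <;> intro h <;> refine h.congr (Filter.Eventually.of_forall fun x => ?_) <;>
    simp [NNReal.smul_def, Real.coe_toNNReal _ (gaussianPDFReal_nonneg 0 1 x)]

private lemma gauss_m1' : ∫ x, x ∂(gaussianReal 0 1) = 0 := by
  rw [gauss_integral_eq']
  have h : ∀ x : ℝ, gaussianPDFReal 0 1 x * x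
      = (Real.sqrt (2*π))⁻¹ * (x * Real.exp (-(2⁻¹) * x^2)) := by
    intro x; rw [gpdf_eq']; ring
  simp_rw [h, MeasureTheory.integral_const_mul, int_id_e', mul_zero]

private lemma gauss_m2' : ∫ x, x * x ∂(gaussianReal 0 1) = 1 := by
  rw [gauss_integral_eq']
  have h : ∀ x : ℝ, gaussianPDFReal 0 1 x * (x * x)
      = (Real.sqrt (2*π))⁻¹ * (x^2 * Real.exp (-(2⁻¹) * x^2)) := by
    intro x; rw [gpdf_eq']; ring
  simp_rw [h, MeasureTheory.integral_const_mul, int_sq_e']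
  field_simp

private lemma gauss_int_id' : Integrable (fun x : ℝ => x) (gaussianReal 0 1) := by
  rw [gauss_integrable_iff']
  have h := integrable_id_e'.const_mul (Real.sqrt (2*π))⁻¹
  refine h.congr (Filter.Eventually.of_forall fun x => ?_)
  show _ = gaussianPDFReal 0 1 x * _
  rw [gpdf_eq']; ring

private lemma gauss_int_sq' : Integrable (fun x : ℝ => x * x) (gaussianReal 0 1) := by
  rw [gauss_integrable_iff']
  have h := integrable_sq_e'.const_mul (Real.sqrt (2*π))⁻¹
  refine h.congr (Filter.Eventually.of_forall fun x => ?_)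
  show _ = gaussianPDFReal 0 1 x * _
  rw [gpdf_eq']; ring

end GaussianMoments

section PiGaussian

variable {ι : Type*} [Fintype ι] [DecidableEq ι]

private noncomputable def gfun' (i j : ι) : ι → ℝ → ℝ :=
  fun l x => (if l = i then x else 1) * (if l = j then x else 1)

private lemma gfun_prod' (i j : ι) (z : ι → ℝ) : z i * z j = ∏ l, gfun' i j l (z l) := by
  unfold gfun'
  rw [Finset.prod_mul_distrib]
  simp

private lemma gfun_integrable' (i j l : ι) : Integrable (gfun' i j l) (gaussianReal 0 1) := by
  unfold gfun'
  by_cases hi : l = i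
  · subst hi
    by_cases hj : l = j
    · subst hj
      simpa using gauss_int_sq'
    · simpa [hj] using gauss_int_id'
  · by_cases hj : l = j
    · subst hj
      simpa [hi] using gauss_int_id'
    · simpa [hi, hj] using (integrable_const (1:ℝ))

private lemma pi_cov_integrable' (i j : ι) :
    Integrable (fun z : ι → ℝ => z i * z j) (Measure.pi fun _ : ι => gaussianReal 0 1) := by
  letI : MeasureSpace ℝ := ⟨gaussianReal 0 1⟩
  haveI : SigmaFinite (volume : Measure ℝ) := inferInstanceAs (SigmaFinite (gaussianReal 0 1))
  have hpi : (Measure.pi fun _ : ι => gaussianReal 0 1) = (volume : Measure (ι → ℝ)) :=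
    (volume_pi).symm
  rw [hpi]
  simp_rw [gfun_prod' i j]
  exact Integrable.fintype_prod (fun l => gfun_integrable' i j l)

private lemma pi_cov' (i j : ι) :
    ∫ z : ι → ℝ, z i * z j ∂(Measure.pi fun _ : ι => gaussianReal 0 1)
      = if i = j then 1 else 0 := by
  letI : MeasureSpace ℝ := ⟨gaussianReal 0 1⟩
  haveI : SigmaFinite (volume : Measure ℝ) := inferInstanceAs (SigmaFinite (gaussianReal 0 1))
  have hpi : (Measure.pi fun _ : ι => gaussianReal 0 1) = (volume : Measure (ι → ℝ)) :=
    (volume_pi).symm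
  rw [hpi]
  simp_rw [gfun_prod' i j]
  rw [MeasureTheory.integral_fintype_prod_volume_eq_prod (f := fun l => gfun' i j l)]
  by_cases h : i = j
  · subst h
    rw [if_pos rfl]
    apply Finset.prod_eq_one
    intro l _
    haveI : IsProbabilityMeasure (volume : Measure ℝ) :=
      inferInstanceAs (IsProbabilityMeasure (gaussianReal 0 1))
    by_cases hl : l = i
    · subst hl
      have h2 : gfun' l l l = fun x : ℝ => x * x := by unfold gfun'; simp
      rw [h2]
      exact gauss_m2'
    · have h2 : gfun' i i l = fun _ : ℝ => (1:ℝ) := by unfold gfun'; simp [hl]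
      rw [h2]
      simp
  · rw [if_neg h]
    apply Finset.prod_eq_zero (Finset.mem_univ i)
    have h2 : gfun' i j i = fun x : ℝ => x := by unfold gfun'; simp [h]
    rw [h2]
    exact gauss_m1'

private lemma pi_signal' (v : ι → ℝ) :
    ∫ z : ι → ℝ, (∑ i, z i * v i)^2 ∂(Measure.pi fun _ : ι => gaussianReal 0 1)
      = ∑ i, v i ^ 2 := by
  have expand : ∀ z : ι → ℝ, (∑ i, z i * v i)^2 = ∑ i, ∑ j, (v i * v j) * (z i * z j) := by
    intro z
    rw [sq, Finset.sum_mul_sum]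
    refine Finset.sum_congr rfl fun i _ => Finset.sum_congr rfl fun j _ => by ring
  simp_rw [expand]
  rw [integral_finset_sum _ (fun i _ => integrable_finset_sum _
    (fun j _ => ((pi_cov_integrable' i j).const_mul (v i * v j))))]
  have h : ∀ i, ∫ z : ι → ℝ, ∑ j, (v i * v j) * (z i * z j)
      ∂(Measure.pi fun _ : ι => gaussianReal 0 1)
      = ∑ j, (v i * v j) * (if i = j then 1 else 0) := by
    intro i
    rw [integral_finset_sum _ (fun j _ => (pi_cov_integrable' i j).const_mul (v i * v j))]
    refine Finset.sum_congr rfl fun j _ => ?_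
    rw [MeasureTheory.integral_const_mul, pi_cov' i j]
  simp_rw [h]
  refine Finset.sum_congr rfl fun i _ => ?_
  simp [Finset.sum_ite_eq, sq]

end PiGaussian

section MatrixDeriv

private lemma trace_aux_left' {dout din : ℕ} (M : Matrix (Fin dout) (Fin din) ℝ)
    (b : Fin dout → ℝ) (a : Fin din → ℝ) :
    Matrix.trace (Mᵀ * vecMulVec b a) = M.mulVec a ⬝ᵥ b := by
  simp only [Matrix.trace, Matrix.diag_apply, Matrix.mul_apply, Matrix.transpose_apply,
    Matrix.vecMulVec_apply, Matrix.mulVec, dotProduct, Finset.sum_mul, Finset.mul_sum]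
  rw [Finset.sum_comm]
  refine Finset.sum_congr rfl fun i _ => Finset.sum_congr rfl fun j _ => by ring

private lemma trace_aux_right' {dout din : ℕ} (M : Matrix (Fin dout) (Fin din) ℝ)
    (b : Fin dout → ℝ) (a : Fin din → ℝ) :
    Matrix.trace (Mᵀ * vecMulVec b a) = Mᵀ.mulVec b ⬝ᵥ a := by
  simp only [Matrix.trace, Matrix.diag_apply, Matrix.mul_apply, Matrix.transpose_apply,
    Matrix.vecMulVec_apply, Matrix.mulVec, dotProduct, Finset.sum_mul, Finset.mul_sum]
  refine Finset.sum_congr rfl fun i _ => Finset.sum_congr rfl fun j _ => by ring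

private noncomputable def vmvL' {dout din : ℕ} (a : Fin din → ℝ) :
    (Fin dout → ℝ) →L[ℝ] Matrix (Fin dout) (Fin din) ℝ :=
  LinearMap.toContinuousLinearMap
    { toFun := fun b => vecMulVec b a
      map_add' := fun x y => by ext i j; simp [Matrix.vecMulVec_apply, add_mul]
      map_smul' := fun c x => by ext i j; simp [Matrix.vecMulVec_apply]; ring }

private noncomputable def vmvR' {dout din : ℕ} (b : Fin dout → ℝ) :
    (Fin din → ℝ) →L[ℝ] Matrix (Fin dout) (Fin din) ℝ :=
  LinearMap.toContinuousLinearMap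
    { toFun := fun a => vecMulVec b a
      map_add' := fun x y => by ext i j; simp [Matrix.vecMulVec_apply, mul_add]
      map_smul' := fun c x => by ext i j; simp [Matrix.vecMulVec_apply]; ring }

private lemma key_fderiv_left' {dout din : ℕ}
    (L : Matrix (Fin dout) (Fin din) ℝ → ℝ)
    (L' : Matrix (Fin dout) (Fin din) ℝ → Matrix (Fin dout) (Fin din) ℝ →L[ℝ] ℝ)
    (hL : ∀ W, HasFDerivAt L (L' W) W)
    (c : ℝ) (W₀ C : Matrix (Fin dout) (Fin din) ℝ)
    (a : Fin din → ℝ) (b₀ : Fin dout → ℝ) (δb : Fin dout → ℝ) :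
    fderiv ℝ (fun b => L (W₀ + c • (vecMulVec b a + C))) b₀ δb
      = L' (W₀ + c • (vecMulVec b₀ a + C)) (c • vecMulVec δb a) := by
  have h0 : ∀ b : Fin dout → ℝ, W₀ + c • (vecMulVec b a + C)
      = (W₀ + c • C) + c • (vmvL' a b) := by
    intro b
    show W₀ + c • (vecMulVec b a + C) = (W₀ + c • C) + c • vecMulVec b a
    rw [smul_add]; abel
  have h1 : HasFDerivAt (fun b => L (W₀ + c • (vecMulVec b a + C)))
      ((L' (W₀ + c • (vecMulVec b₀ a + C))).comp (c • (vmvL' a : _ →L[ℝ] _))) b₀ := by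
    have hlin : HasFDerivAt (fun b : Fin dout → ℝ => (W₀ + c • C) + c • (vmvL' a b))
        (c • (vmvL' a : _ →L[ℝ] _)) b₀ :=
      (((vmvL' a : _ →L[ℝ] _).hasFDerivAt.const_smul c)).const_add (W₀ + c • C)
    have hlin' : HasFDerivAt (fun b => W₀ + c • (vecMulVec b a + C))
        (c • (vmvL' a : _ →L[ℝ] _)) b₀ := by
      have hfe : (fun b : Fin dout → ℝ => W₀ + c • (vecMulVec b a + C))
          = fun b => (W₀ + c • C) + c • (vmvL' a b) := funext h0
      rw [hfe]; exact hlin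
    exact (hL (W₀ + c • (vecMulVec b₀ a + C))).comp b₀ hlin'
  rw [h1.fderiv]
  rfl

private lemma key_fderiv_right' {dout din : ℕ}
    (L : Matrix (Fin dout) (Fin din) ℝ → ℝ)
    (L' : Matrix (Fin dout) (Fin din) ℝ → Matrix (Fin dout) (Fin din) ℝ →L[ℝ] ℝ)
    (hL : ∀ W, HasFDerivAt L (L' W) W)
    (c : ℝ) (W₀ C : Matrix (Fin dout) (Fin din) ℝ)
    (b : Fin dout → ℝ) (a₀ : Fin din → ℝ) (δa : Fin din → ℝ) :
    fderiv ℝ (fun a => L (W₀ + c • (vecMulVec b a + C))) a₀ δa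
      = L' (W₀ + c • (vecMulVec b a₀ + C)) (c • vecMulVec b δa) := by
  have h0 : ∀ a : Fin din → ℝ, W₀ + c • (vecMulVec b a + C)
      = (W₀ + c • C) + c • (vmvR' b a) := by
    intro a
    show W₀ + c • (vecMulVec b a + C) = (W₀ + c • C) + c • vecMulVec b a
    rw [smul_add]; abel
  have h1 : HasFDerivAt (fun a => L (W₀ + c • (vecMulVec b a + C)))
      ((L' (W₀ + c • (vecMulVec b a₀ + C))).comp (c • (vmvR' b : _ →L[ℝ] _))) a₀ := by
    have hlin : HasFDerivAt (fun a : Fin din → ℝ => (W₀ + c • C) + c • (vmvR' b a))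
        (c • (vmvR' b : _ →L[ℝ] _)) a₀ :=
      (((vmvR' b : _ →L[ℝ] _).hasFDerivAt.const_smul c)).const_add (W₀ + c • C)
    have hlin' : HasFDerivAt (fun a => W₀ + c • (vecMulVec b a + C))
        (c • (vmvR' b : _ →L[ℝ] _)) a₀ := by
      have hfe : (fun a : Fin din → ℝ => W₀ + c • (vecMulVec b a + C))
          = fun a => (W₀ + c • C) + c • (vmvR' b a) := funext h0
      rw [hfe]; exact hlin
    exact (hL (W₀ + c • (vecMulVec b a₀ + C))).comp a₀ hlin'
  rw [h1.fderiv]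
  rfl

end MatrixDeriv

/-- **Directional collapse under naive scaling: signal decay, FD-SNR formula, and
critical rank.**  With naive LoRA scaling `γ = α`, for
`F(b,a) = L(W₀ + (α/r)·(b aᵀ + Σ_{j≠k} b_j a_jᵀ))`, dense gradient
`G = G(W₀ + (α/r)·Σ_j b_j a_jᵀ)` and active atom gradient stack
`g_k = (G a_k ; Gᵀ b_k) ∈ ℝ^q` (`q = d_out + d_in`):
(i) the active-atom gradient of `F` at `(b_k, a_k)` equals `(α/r)·g_k`, so its norm is
`(α/r)·‖g_k‖`; (ii) for standard Gaussian `z ∈ ℝ^q`, the signal power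
`E[⟨z,(α/r)g_k⟩²] = α²‖g_k‖²/r²`; (iii) the FD-SNR (signal power over noise power
`σ_ξ²/(2μ²)`) equals `2α²μ²‖g_k‖²/(r²σ_ξ²)`; (iv) if `g_k ≠ 0`, the FD-SNR equals `1`
exactly when `r = √2·α·μ·‖g_k‖/σ_ξ`. -/
theorem stmt4 {dout din : ℕ}
    (L : Matrix (Fin dout) (Fin din) ℝ → ℝ)
    (L' : Matrix (Fin dout) (Fin din) ℝ → Matrix (Fin dout) (Fin din) ℝ →L[ℝ] ℝ)
    (G : Matrix (Fin dout) (Fin din) ℝ → Matrix (Fin dout) (Fin din) ℝ)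
    (hL : ∀ W, HasFDerivAt L (L' W) W)
    (hG : ∀ W H, L' W H = Matrix.trace ((G W)ᵀ * H))
    (r : ℕ) (hr : 1 ≤ r) (α : ℝ) (hα : 0 < α)
    (W₀ : Matrix (Fin dout) (Fin din) ℝ)
    (bs : Fin r → Fin dout → ℝ) (as : Fin r → Fin din → ℝ) (k : Fin r)
    (F : (Fin dout → ℝ) → (Fin din → ℝ) → ℝ)
    (hF : ∀ b a, F b a = L (W₀ + (α / (r : ℝ)) •
      (vecMulVec b a + ∑ j ∈ univ.erase k, vecMulVec (bs j) (as j))))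
    (Gm : Matrix (Fin dout) (Fin din) ℝ)
    (hGm : Gm = G (W₀ + (α / (r : ℝ)) • ∑ j, vecMulVec (bs j) (as j)))
    (gk : Fin dout ⊕ Fin din → ℝ)
    (hgk : gk = Sum.elim (Gm.mulVec (as k)) (Gmᵀ.mulVec (bs k)))
    (μ σξ : ℝ) (hμ : 0 < μ) (hσ : 0 < σξ) :
    -- (i) active-atom gradient equals (α/r)·g_k …
    ((∀ δb : Fin dout → ℝ,
        fderiv ℝ (fun b' => F b' (as k)) (bs k) δb
          = ((α / (r : ℝ)) • Gm.mulVec (as k)) ⬝ᵥ δb) ∧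
      (∀ δa : Fin din → ℝ,
        fderiv ℝ (fun a' => F (bs k) a') (as k) δa
          = ((α / (r : ℝ)) • Gmᵀ.mulVec (bs k)) ⬝ᵥ δa) ∧
      -- … so its norm is (α/r)·‖g_k‖
      Real.sqrt (∑ i, ((α / (r : ℝ)) * gk i) ^ 2)
        = (α / (r : ℝ)) * Real.sqrt (∑ i, gk i ^ 2)) ∧
    -- (ii) signal power
    (∫ z : Fin dout ⊕ Fin din → ℝ, (∑ i, z i * ((α / (r : ℝ)) * gk i)) ^ 2
        ∂(Measure.pi fun _ : Fin dout ⊕ Fin din => gaussianReal 0 1)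
      = α ^ 2 * (∑ i, gk i ^ 2) / (r : ℝ) ^ 2) ∧
    -- (iii) FD-SNR formula
    ((α ^ 2 * (∑ i, gk i ^ 2) / (r : ℝ) ^ 2) / (σξ ^ 2 / (2 * μ ^ 2))
      = 2 * α ^ 2 * μ ^ 2 * (∑ i, gk i ^ 2) / ((r : ℝ) ^ 2 * σξ ^ 2)) ∧
    -- (iv) critical rank
    (gk ≠ 0 →
      ((α ^ 2 * (∑ i, gk i ^ 2) / (r : ℝ) ^ 2) / (σξ ^ 2 / (2 * μ ^ 2)) = 1
        ↔ (r : ℝ) = Real.sqrt 2 * α * μ * Real.sqrt (∑ i, gk i ^ 2) / σξ)) := by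
  have hr1 : (1:ℝ) ≤ (r:ℝ) := by exact_mod_cast hr
  have hrpos : (0:ℝ) < (r:ℝ) := lt_of_lt_of_le one_pos hr1
  have hcpos : 0 < α / (r:ℝ) := div_pos hα hrpos
  set c : ℝ := α / (r:ℝ) with hc
  have hWfull : W₀ + c • (vecMulVec (bs k) (as k)
        + ∑ j ∈ univ.erase k, vecMulVec (bs j) (as j))
      = W₀ + c • ∑ j, vecMulVec (bs j) (as j) := by
    rw [Finset.add_sum_erase univ (fun j => vecMulVec (bs j) (as j)) (Finset.mem_univ k)]
  refine ⟨⟨?_, ?_, ?_⟩, ?_, ?_, ?_⟩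
  · -- (i.a)
    intro δb
    have hfeq : (fun b' => F b' (as k)) = fun b' => L (W₀ + c •
        (vecMulVec b' (as k) + ∑ j ∈ univ.erase k, vecMulVec (bs j) (as j))) :=
      funext fun b' => hF b' (as k)
    rw [hfeq, key_fderiv_left' L L' hL c W₀ _ (as k) (bs k) δb, hWfull,
      hG, ← hGm, Matrix.mul_smul, Matrix.trace_smul, trace_aux_left',
      smul_dotProduct]
  · -- (i.b)
    intro δa
    have hfeq : (fun a' => F (bs k) a') = fun a' => L (W₀ + c •
        (vecMulVec (bs k) a' + ∑ j ∈ univ.erase k, vecMulVec (bs j) (as j))) :=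
      funext fun a' => hF (bs k) a'
    rw [hfeq, key_fderiv_right' L L' hL c W₀ _ (bs k) (as k) δa, hWfull,
      hG, ← hGm, Matrix.mul_smul, Matrix.trace_smul, trace_aux_right',
      smul_dotProduct]
  · -- (i.c) norm scaling
    have h1 : ∀ i, (c * gk i) ^ 2 = c ^ 2 * gk i ^ 2 := fun i => by ring
    simp_rw [h1]
    rw [← Finset.mul_sum, Real.sqrt_mul (sq_nonneg c), Real.sqrt_sq hcpos.le]
  · -- (ii)
    rw [pi_signal' (fun i => c * gk i)]
    have h1 : ∀ i : Fin dout ⊕ Fin din, (c * gk i) ^ 2 = c ^ 2 * gk i ^ 2 := fun i => by ring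
    simp_rw [h1]
    rw [← Finset.mul_sum, hc, div_pow]
    ring
  · -- (iii)
    field_simp
  · -- (iv)
    intro hgk0
    set S : ℝ := ∑ i, gk i ^ 2 with hS
    have hSpos : 0 < S := by
      rcases Function.ne_iff.1 hgk0 with ⟨i, hi⟩
      have h2 : 0 < gk i ^ 2 := pow_two_pos_of_ne_zero hi
      exact Finset.sum_pos' (fun j _ => sq_nonneg _) ⟨i, Finset.mem_univ i, h2⟩
    have htpos : 0 < Real.sqrt 2 * α * μ * Real.sqrt S / σξ := by
      have hs := Real.sqrt_pos.2 hSpos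
      have h2 : (0:ℝ) < Real.sqrt 2 := Real.sqrt_pos.2 (by norm_num)
      exact div_pos (mul_pos (mul_pos (mul_pos h2 hα) hμ) hs) hσ
    have key : (Real.sqrt 2 * α * μ * Real.sqrt S / σξ) ^ 2 = 2 * α^2 * μ^2 * S / σξ^2 := by
      rw [div_pow, mul_pow, mul_pow, mul_pow, Real.sq_sqrt (by norm_num : (0:ℝ) ≤ 2),
        Real.sq_sqrt hSpos.le]
    constructor
    · intro h
      have hr2 : (r:ℝ)^2 = (Real.sqrt 2 * α * μ * Real.sqrt S / σξ) ^ 2 := by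
        rw [key]
        field_simp at h ⊢
        linarith [h]
      have := congrArg Real.sqrt hr2
      rwa [Real.sqrt_sq hrpos.le, Real.sqrt_sq htpos.le] at this
    · intro h
      have hr2 : (r:ℝ)^2 = 2 * α^2 * μ^2 * S / σξ^2 := by rw [h, key]
      rw [hr2]
      field_simp
end

section
/- (Per-step descent with a biased projected estimator.) Let f : ℝ^n → ℝ be differentiable with L-Lipschitz gradient, let P be an orthogonal projection on ℝ^n, let θ ∈ ℝ^n, η > 0, and let ĝ be an ℝ^n-valued random vector with finite second moment such that ĝ ∈ range(P) almost surely and E[ĝ] = P∇f(θ) + b for some deterministic vector b with ‖b‖ ≤ β. Then E[f(θ − η·ĝ)] ≤ f(θ) − (3η/4)·‖P∇f(θ)‖² + η·β² + (η²L/2)·E[‖ĝ‖²]. -/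
open MeasureTheory ProbabilityTheory
open scoped RealInnerProductSpace

lemma descent_abs {n : ℕ} (f : EuclideanSpace ℝ (Fin n) → ℝ) (Lc : ℝ) (hLc : 0 ≤ Lc)
    (hf : Differentiable ℝ f)
    (hlip : ∀ x y, ‖gradient f x - gradient f y‖ ≤ Lc * ‖x - y‖)
    (x y : EuclideanSpace ℝ (Fin n)) :
    |f y - f x - ⟪gradient f x, y - x⟫| ≤ Lc / 2 * ‖y - x‖ ^ 2 := by
  set v := y - x with hv
  have hgc : Continuous (fun z => gradient f z) := by
    have : LipschitzWith ⟨Lc, hLc⟩ (fun z => gradient f z) := by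
      apply LipschitzWith.of_dist_le_mul
      intro a b
      rw [dist_eq_norm, dist_eq_norm]; exact hlip a b
    exact this.continuous
  have hderiv : ∀ t : ℝ, HasDerivAt (fun t : ℝ => f (x + t • v))
      ⟪gradient f (x + t • v), v⟫ t := by
    intro t
    have h1 : HasDerivAt (fun t : ℝ => x + t • v) v t := by
      simpa using (hasDerivAt_id t).smul_const v |>.const_add x
    have h2 := ((hf (x + t • v)).hasGradientAt).hasFDerivAt
    have := h2.comp_hasDerivAt t h1
    simp only [Function.comp_def] at this
    simpa using this
  have hcont : Continuous (fun t : ℝ => ⟪gradient f (x + t • v), v⟫) := by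
    exact (hgc.comp (continuous_const.add (continuous_id.smul continuous_const))).inner continuous_const
  have hFTC : f (x + (1:ℝ) • v) - f (x + (0:ℝ) • v)
      = ∫ t in (0:ℝ)..1, ⟪gradient f (x + t • v), v⟫ := by
    rw [intervalIntegral.integral_eq_sub_of_hasDerivAt (fun t _ => hderiv t)
      (hcont.intervalIntegrable 0 1)]
  have hxy : f y - f x = ∫ t in (0:ℝ)..1, ⟪gradient f (x + t • v), v⟫ := by
    simpa [hv] using hFTC
  have hc : ⟪gradient f x, v⟫ = ∫ t in (0:ℝ)..1, ⟪gradient f x, v⟫ := by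
    simp
  have key : f y - f x - ⟪gradient f x, v⟫
      = ∫ t in (0:ℝ)..1, ⟪gradient f (x + t • v) - gradient f x, v⟫ := by
    rw [hxy, hc, ← intervalIntegral.integral_sub (hcont.intervalIntegrable 0 1)
      (intervalIntegrable_const)]
    congr 1; ext t; rw [inner_sub_left]
  rw [key]
  have hbound : ∀ t ∈ Set.Icc (0:ℝ) 1,
      |⟪gradient f (x + t • v) - gradient f x, v⟫| ≤ Lc * t * ‖v‖ ^ 2 := by
    intro t ht
    calc |⟪gradient f (x + t • v) - gradient f x, v⟫|
        ≤ ‖gradient f (x + t • v) - gradient f x‖ * ‖v‖ := abs_real_inner_le_norm _ _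
      _ ≤ (Lc * ‖(x + t • v) - x‖) * ‖v‖ := by
          gcongr; exact hlip _ _
      _ = Lc * t * ‖v‖ ^ 2 := by
          rw [add_sub_cancel_left, norm_smul, Real.norm_eq_abs, abs_of_nonneg ht.1]; ring
  calc |∫ t in (0:ℝ)..1, ⟪gradient f (x + t • v) - gradient f x, v⟫|
      ≤ ∫ t in (0:ℝ)..1, Lc * t * ‖v‖ ^ 2 := by
        have := intervalIntegral.norm_integral_le_abs_of_norm_le (μ := volume)
          (f := fun t => ⟪gradient f (x + t • v) - gradient f x, v⟫)
          (g := fun t => Lc * t * ‖v‖ ^ 2) (a := 0) (b := 1) ?_ ?_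
        · rw [Real.norm_eq_abs] at this
          refine this.trans (le_of_eq (abs_of_nonneg ?_))
          apply intervalIntegral.integral_nonneg (by norm_num)
          intro t ht
          exact mul_nonneg (mul_nonneg hLc ht.1) (sq_nonneg _)
        · filter_upwards [ae_restrict_mem measurableSet_uIoc] with t ht
          rw [Set.uIoc_of_le (by norm_num : (0:ℝ) ≤ 1)] at ht
          rw [Real.norm_eq_abs]
          exact hbound t ⟨ht.1.le, ht.2⟩
        · exact ((continuous_const.mul continuous_id).mul
            continuous_const : Continuous fun t : ℝ => Lc * t * ‖v‖ ^ 2).intervalIntegrable 0 1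
    _ = Lc / 2 * ‖v‖ ^ 2 := by
        rw [intervalIntegral.integral_mul_const, intervalIntegral.integral_const_mul,
          integral_id]
        ring


set_option maxHeartbeats 1000000 in
/-- **Per-step descent with a biased projected estimator.**  Let `f : ℝⁿ → ℝ` be
differentiable with `L`-Lipschitz gradient, `P` an orthogonal projection (idempotent
and self-adjoint), `θ ∈ ℝⁿ`, `η > 0`, and `ghat` a square-integrable random vector with
`ghat ∈ range(P)` a.s. and `E[ghat] = P∇f(θ) + b`, `‖b‖ ≤ β`.  Then
`E[f(θ − η ghat)] ≤ f(θ) − (3η/4)‖P∇f(θ)‖² + ηβ² + (η²L/2)·E[‖ghat‖²]`. -/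
theorem stmt10 (n : ℕ) (f : EuclideanSpace ℝ (Fin n) → ℝ) (Lc : ℝ) (hLc : 0 ≤ Lc)
    (hf : Differentiable ℝ f)
    (hlip : ∀ x y, ‖gradient f x - gradient f y‖ ≤ Lc * ‖x - y‖)
    (P : EuclideanSpace ℝ (Fin n) →L[ℝ] EuclideanSpace ℝ (Fin n))
    (hPidem : ∀ x, P (P x) = P x)
    (hPsa : ∀ x y, ⟪P x, y⟫ = ⟪x, P y⟫)
    (θ : EuclideanSpace ℝ (Fin n)) (η : ℝ) (hη : 0 < η)
    (Ω : Type*) [MeasureSpace Ω] [IsProbabilityMeasure (ℙ : Measure Ω)]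
    (ghat : Ω → EuclideanSpace ℝ (Fin n))
    (hmeas : Measurable ghat) (hL2 : MemLp ghat 2 ℙ)
    (hrange : ∀ᵐ (ω : Ω) ∂ℙ, ghat ω ∈ Set.range P)
    (b : EuclideanSpace ℝ (Fin n)) (β : ℝ)
    (hmean : ∫ (ω : Ω), ghat ω ∂ℙ = P (gradient f θ) + b)
    (hb : ‖b‖ ≤ β) :
    ∫ (ω : Ω), f (θ - η • ghat ω) ∂ℙ
      ≤ f θ - (3 * η / 4) * ‖P (gradient f θ)‖ ^ 2 + η * β ^ 2
        + (η ^ 2 * Lc / 2) * ∫ (ω : Ω), ‖ghat ω‖ ^ 2 ∂ℙ := by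
  have hgint : Integrable ghat ℙ := hL2.integrable (by norm_num)
  have hrpow : ∀ x : ℝ, x ^ (ENNReal.toReal 2) = x ^ 2 := by
    intro x
    rw [ENNReal.toReal_ofNat, show (2:ℝ) = ((2:ℕ):ℝ) by norm_num, Real.rpow_natCast]
  have hn2 : Integrable (fun ω => ‖ghat ω‖ ^ 2) ℙ := by
    have h := hL2.integrable_norm_rpow (by norm_num) (by norm_num)
    simpa [hrpow] using h
  have hin : Integrable (fun ω => ⟪gradient f θ, ghat ω⟫) ℙ :=
    hgint.const_inner (gradient f θ)
  -- pointwise descent bound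
  have hpt : ∀ ω, f (θ - η • ghat ω)
      ≤ f θ - η * ⟪gradient f θ, ghat ω⟫ + (η ^ 2 * Lc / 2) * ‖ghat ω‖ ^ 2 := by
    intro ω
    have h := descent_abs f Lc hLc hf hlip θ (θ - η • ghat ω)
    rw [sub_sub_cancel_left] at h
    have e1 : ⟪gradient f θ, -(η • ghat ω)⟫ = -(η * ⟪gradient f θ, ghat ω⟫) := by
      rw [inner_neg_right, real_inner_smul_right]
    have e2 : ‖-(η • ghat ω)‖ ^ 2 = η ^ 2 * ‖ghat ω‖ ^ 2 := by
      rw [norm_neg, norm_smul, Real.norm_eq_abs, mul_pow, sq_abs]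
    rw [e1, e2] at h
    have h3 := (abs_le.mp h).2
    nlinarith [h3]
  -- integrability of the LHS
  have hLmeas : AEStronglyMeasurable (fun ω => f (θ - η • ghat ω)) ℙ := by
    exact (hf.continuous.measurable.comp
      (measurable_const.sub (hmeas.const_smul η))).aestronglyMeasurable
  have hLint : Integrable (fun ω => f (θ - η • ghat ω)) ℙ := by
    refine Integrable.mono'
      (g := fun ω => |f θ| + η * ‖gradient f θ‖ * ‖ghat ω‖ + (η ^ 2 * Lc / 2) * ‖ghat ω‖ ^ 2)
      (((integrable_const _).add ((hgint.norm).const_mul _)).add (hn2.const_mul _))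
      hLmeas ?_
    filter_upwards with ω
    have h := descent_abs f Lc hLc hf hlip θ (θ - η • ghat ω)
    rw [sub_sub_cancel_left] at h
    have e1 : ⟪gradient f θ, -(η • ghat ω)⟫ = -(η * ⟪gradient f θ, ghat ω⟫) := by
      rw [inner_neg_right, real_inner_smul_right]
    have e2 : ‖-(η • ghat ω)‖ ^ 2 = η ^ 2 * ‖ghat ω‖ ^ 2 := by
      rw [norm_neg, norm_smul, Real.norm_eq_abs, mul_pow, sq_abs]
    rw [e1, e2] at h
    have h4 := abs_le.mp h
    have hi : |⟪gradient f θ, ghat ω⟫| ≤ ‖gradient f θ‖ * ‖ghat ω‖ :=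
      abs_real_inner_le_norm _ _
    have hi2 := abs_le.mp hi
    have hft := abs_le.mp (le_refl |f θ|)
    rw [Real.norm_eq_abs, abs_le]
    constructor <;> nlinarith [neg_abs_le (f θ), le_abs_self (f θ), hη.le,
      mul_nonneg hη.le (norm_nonneg (ghat ω))]
  -- P b = b
  have hPb : P b = b := by
    have h1 : ∫ ω, P (ghat ω) ∂ℙ = P (∫ ω, ghat ω ∂ℙ) := P.integral_comp_comm hgint
    have h2 : ∫ ω, P (ghat ω) ∂ℙ = ∫ ω, ghat ω ∂ℙ := by
      refine integral_congr_ae ?_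
      filter_upwards [hrange] with ω hω
      obtain ⟨z, hz⟩ := hω
      rw [← hz, hPidem]
    rw [h2, hmean, map_add, hPidem] at h1
    have := h1.symm
    rwa [add_right_inj] at this
  -- mean inner product
  have hmean_inner : ∫ ω, ⟪gradient f θ, ghat ω⟫ ∂ℙ
      = ‖P (gradient f θ)‖ ^ 2 + ⟪P (gradient f θ), b⟫ := by
    rw [integral_inner hgint, hmean, inner_add_right]
    congr 1
    · have h1 := hPsa (gradient f θ) (gradient f θ)
      have h2 := hPsa (P (gradient f θ)) (gradient f θ)
      rw [hPidem] at h2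
      rw [← h1, h2, real_inner_self_eq_norm_sq]
    · rw [← hPb, ← hPsa, hPb]
  have hβ0 : 0 ≤ β := le_trans (norm_nonneg b) hb
  have hRint : Integrable (fun ω => f θ - η * ⟪gradient f θ, ghat ω⟫
      + (η ^ 2 * Lc / 2) * ‖ghat ω‖ ^ 2) ℙ :=
    ((integrable_const _).sub (hin.const_mul η)).add (hn2.const_mul _)
  calc ∫ ω, f (θ - η • ghat ω) ∂ℙ
      ≤ ∫ ω, (f θ - η * ⟪gradient f θ, ghat ω⟫ + (η ^ 2 * Lc / 2) * ‖ghat ω‖ ^ 2) ∂ℙ :=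
        integral_mono hLint hRint hpt
    _ = f θ - η * (‖P (gradient f θ)‖ ^ 2 + ⟪P (gradient f θ), b⟫)
          + (η ^ 2 * Lc / 2) * ∫ ω, ‖ghat ω‖ ^ 2 ∂ℙ := by
        have hA : Integrable (fun ω => f θ - η * ⟪gradient f θ, ghat ω⟫) ℙ :=
          (integrable_const _).sub (hin.const_mul η)
        have hB : Integrable (fun ω => (η ^ 2 * Lc / 2) * ‖ghat ω‖ ^ 2) ℙ :=
          hn2.const_mul _
        rw [integral_add hA hB,
          integral_sub (integrable_const (f θ)) (hin.const_mul η), integral_const,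
          integral_const_mul, integral_const_mul, hmean_inner]
        simp
    _ ≤ f θ - (3 * η / 4) * ‖P (gradient f θ)‖ ^ 2 + η * β ^ 2
          + (η ^ 2 * Lc / 2) * ∫ ω, ‖ghat ω‖ ^ 2 ∂ℙ := by
        have hi : |⟪P (gradient f θ), b⟫| ≤ ‖P (gradient f θ)‖ * ‖b‖ :=
          abs_real_inner_le_norm _ _
        have hi2 := (abs_le.mp hi).1
        have hnn : 0 ≤ ‖P (gradient f θ)‖ := norm_nonneg _
        nlinarith [sq_nonneg (‖P (gradient f θ)‖ - 2 * β),
          mul_le_mul_of_nonneg_left hb hnn, mul_pos hη (by norm_num : (0:ℝ) < 1)]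
end
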